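/- Let k ≥ 1, d ≥ 3, n ≥ k(d-1)+2, and let G attain the maximum connective eccentricity index among all k-connected graphs of order n with diameter d. Let u_0 u_1 ⋯ u_d be a diametral path in G and A_i = {v ∈ V(G) : d_G(v, u_0) = i} for 0 ≤ i ≤ d. Then for every i ∈ {1, …, d}, the induced subgraphs G[A_i] and G[A_{i-1} ∪ A_i] are complete graphs. -/

import Mathlib

open Finset
open scoped Classical

namespace CEI

variable {V : Type*}

/-- Degree of a vertex. -/
noncomputable def deg [Fintype V] (G : SimpleGraph V) (v : V) : ℕ :=
  (Finset.univ.filter fun u => G.Adj v u).card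

/-- Eccentricity of a vertex. -/
noncomputable def ecc [Fintype V] (G : SimpleGraph V) (v : V) : ℕ :=
  Finset.univ.sup fun u => G.dist v u

/-- Connective eccentricity index. -/
noncomputable def cei [Fintype V] (G : SimpleGraph V) : ℝ :=
  ∑ v : V, (deg G v : ℝ) / (ecc G v)

/-- Diameter. -/
noncomputable def diam [Fintype V] (G : SimpleGraph V) : ℕ :=
  Finset.univ.sup fun v => ecc G v

/-- `G` is `k`-connected: removing fewer than `k` vertices leaves a
connected graph with more than one vertex. -/
def KConnected [Fintype V] (k : ℕ) (G : SimpleGraph V) : Prop :=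
  ∀ A : Finset V, A.card < k →
    (G.induce ((A : Set V)ᶜ)).Connected ∧ 1 < ((A : Set V)ᶜ).ncard

/-- A set of pairwise non-adjacent vertices. -/
def IsIndepSet (G : SimpleGraph V) (s : Set V) : Prop :=
  s.Pairwise fun u v => ¬ G.Adj u v

/-- Independence number. -/
noncomputable def indepNum [Fintype V] (G : SimpleGraph V) : ℕ :=
  Finset.univ.sup fun s : Finset V => if IsIndepSet G ↑s then s.card else 0

/-- A vertex cut: deleting `A` disconnects `G`. -/
def IsVertexCut (G : SimpleGraph V) (A : Finset V) : Prop :=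
  ¬ (G.induce ((A : Set V)ᶜ)).Preconnected

/-- Sequential join of complete graphs with part sizes `cs`. -/
def seqCompleteJoin (cs : List ℕ) : SimpleGraph ((i : Fin cs.length) × Fin (cs.get i)) where
  Adj x y := x ≠ y ∧ (x.1.val = y.1.val ∨ x.1.val + 1 = y.1.val ∨ y.1.val + 1 = x.1.val)
  symm := ⟨fun x y ⟨h1, h2⟩ => ⟨h1.symm, by tauto⟩⟩
  loopless := ⟨fun x ⟨h, _⟩ => h rfl⟩

/-- `K_k ∨ (K_a ∪ K_b)`. -/
def KJoin2 (k a b : ℕ) : SimpleGraph (Fin (k + a + b)) where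
  Adj x y := x ≠ y ∧ (x.val < k ∨ y.val < k ∨ (x.val < k + a ↔ y.val < k + a))
  symm := ⟨fun x y ⟨h1, h2⟩ => ⟨h1.symm, by tauto⟩⟩
  loopless := ⟨fun x ⟨h, _⟩ => h rfl⟩

/-- `K_b ∨ a K_1`. -/
def splitGraph (b a : ℕ) : SimpleGraph (Fin (b + a)) where
  Adj x y := x ≠ y ∧ (x.val < b ∨ y.val < b)
  symm := ⟨fun x y ⟨h1, h2⟩ => ⟨h1.symm, by tauto⟩⟩
  loopless := ⟨fun x ⟨h, _⟩ => h rfl⟩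

/-- `S_{n,α} = K_k ∨ (K_1 ∪ (K_{n-k-α} ∨ (α-1)K_1))`; vertices `0,…,k-1` form the
clique `K_k` joined to everything, vertex `k` is the isolated-ish `K_1`, vertices
`k+1,…,n-α` form `K_{n-k-α}`, and vertices `n-α+1,…,n-1` are the `α-1` independent ones. -/
def Sgraph (n k a : ℕ) : SimpleGraph (Fin n) where
  Adj x y := x ≠ y ∧ (x.val < k ∨ y.val < k ∨
    (x.val ≠ k ∧ y.val ≠ k ∧ ¬(n + 1 - a ≤ x.val ∧ n + 1 - a ≤ y.val)))
  symm := ⟨fun x y ⟨h1, h2⟩ => ⟨h1.symm, by tauto⟩⟩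
  loopless := ⟨fun x ⟨h, _⟩ => h rfl⟩

/-!
Adding an edge `xy` to a connected graph can only raise degrees and lower eccentricities, and it
raises the degree of `x`, so it strictly increases the connective eccentricity index; it also
preserves `k`-connectivity. If `x` and `y` lie in the same or in consecutive distance levels
from `u₀`, every edge of the new graph still changes the distance to `u₀` by at most one, so
distances from `u₀` are unchanged, `d(u₀, u_d) = d` survives and the diameter stays `d`.
Hence a maximal graph already contains every such edge.
-/

open SimpleGraph

lemma le_add_dist_of_forall_adj {G : SimpleGraph V} (f : V → ℕ)
    (hf : ∀ a b, G.Adj a b → f b ≤ f a + 1) {a b : V} (hab : G.Reachable a b) :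
    f b ≤ f a + G.dist a b := by
  obtain ⟨q, hq⟩ := hab.exists_walk_length_eq_dist
  rw [← hq]
  clear hq hab
  induction q with
  | nil => simp
  | cons h q ih =>
    have := hf _ _ h
    rw [Walk.length_cons]
    omega

lemma dist_sup_edge_eq {G : SimpleGraph V} (hG : G.Connected) {u x y : V}
    (hxy : G.dist u y ≤ G.dist u x + 1) (hyx : G.dist u x ≤ G.dist u y + 1) (v : V) :
    (G ⊔ edge x y).dist u v = G.dist u v := by
  refine le_antisymm ((hG.preconnected u v).dist_anti le_sup_left) ?_
  have step : ∀ a b, (G ⊔ edge x y).Adj a b → G.dist u b ≤ G.dist u a + 1 := by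
    rintro a b (hab | hab)
    · exact (hG.dist_triangle).trans (by rw [dist_eq_one_iff_adj.2 hab])
    · obtain ⟨⟨rfl, rfl⟩ | ⟨rfl, rfl⟩, -⟩ := (edge_adj _ _ _ _).1 hab <;> assumption
  simpa using le_add_dist_of_forall_adj (G.dist u) step ((hG.mono le_sup_left).preconnected u v)

section

variable [Fintype V] {k : ℕ} {G H : SimpleGraph V}

lemma deg_mono (h : G ≤ H) (v : V) : deg G v ≤ deg H v :=
  card_le_card (monotone_filter_right _ fun _ _ hu => h hu)

lemma exists_deg_lt_of_lt (h : G < H) : ∃ v, deg G v < deg H v := by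
  obtain ⟨x, y, hH, hG⟩ : ∃ x y, H.Adj x y ∧ ¬G.Adj x y := by
    by_contra! hall
    exact h.not_ge fun x y => hall x y
  refine ⟨x, card_lt_card ⟨monotone_filter_right _ fun _ _ hu => h.le hu, fun hsub => hG ?_⟩⟩
  simpa using hsub (mem_filter.2 ⟨mem_univ y, hH⟩)

lemma dist_le_ecc (G : SimpleGraph V) (v u : V) : G.dist v u ≤ ecc G v :=
  le_sup (f := fun u => G.dist v u) (mem_univ u)

lemma ecc_le_diam (G : SimpleGraph V) (v : V) : ecc G v ≤ diam G :=
  le_sup (f := ecc G) (mem_univ v)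

lemma one_le_ecc [Nontrivial V] (hG : G.Connected) (v : V) : 1 ≤ ecc G v :=
  let ⟨u, hu⟩ := exists_ne v
  (hG.pos_dist_of_ne hu.symm).trans_le (dist_le_ecc G v u)

lemma ecc_anti (hG : G.Connected) (h : G ≤ H) (v : V) :
    ecc H v ≤ ecc G v :=
  sup_mono_fun fun u _ => (hG.preconnected v u).dist_anti h

lemma diam_anti (hG : G.Connected) (h : G ≤ H) : diam H ≤ diam G :=
  sup_mono_fun fun v _ => ecc_anti hG h v

theorem cei_lt_cei_of_lt [Nontrivial V] (hG : G.Connected) (h : G < H) :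
    cei G < cei H := by
  have hH : H.Connected := hG.mono h.le
  have ecc_pos : ∀ v, (0 : ℝ) < ecc H v := fun v => by exact_mod_cast one_le_ecc hH v
  have ecc_le : ∀ v, (ecc H v : ℝ) ≤ ecc G v := fun v => by exact_mod_cast ecc_anti hG h.le v
  obtain ⟨x, hx⟩ := exists_deg_lt_of_lt h
  refine sum_lt_sum (fun v _ => ?_) ⟨x, mem_univ x, ?_⟩
  · exact div_le_div₀ (Nat.cast_nonneg _) (by exact_mod_cast deg_mono h.le v) (ecc_pos v) (ecc_le v)
  · exact div_lt_div₀ (by exact_mod_cast hx) (ecc_le x) (Nat.cast_nonneg _) (ecc_pos x)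

lemma KConnected.connected (hG : KConnected k G) (hk : 0 < k) :
    G.Connected := by
  have h := (hG ∅ (by simpa using hk)).1
  rw [coe_empty, Set.compl_empty] at h
  exact (induceUnivIso G).connected_iff.mp h

lemma KConnected.nontrivial (hG : KConnected k G) (hk : 0 < k) :
    Nontrivial V := by
  have h := (hG ∅ (by simpa using hk)).2
  rw [coe_empty, Set.compl_empty, Set.ncard_univ, Nat.card_eq_fintype_card] at h
  exact Fintype.one_lt_card_iff_nontrivial.mp h

lemma KConnected.mono (hG : KConnected k G) (h : G ≤ H) :
    KConnected k H := fun A hA =>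
  ⟨(hG A hA).1.mono fun _ _ hab => h hab, (hG A hA).2⟩

lemma diam_sup_edge_eq {G : SimpleGraph V} (hG : G.Connected)
    {u w x y : V} (huw : G.dist u w = diam G)
    (hxy : G.dist u y ≤ G.dist u x + 1) (hyx : G.dist u x ≤ G.dist u y + 1) :
    diam (G ⊔ edge x y) = diam G := by
  refine le_antisymm (diam_anti hG le_sup_left) ?_
  calc diam G = (G ⊔ edge x y).dist u w := by rw [dist_sup_edge_eq hG hxy hyx, huw]
    _ ≤ ecc (G ⊔ edge x y) u := dist_le_ecc _ u w
    _ ≤ diam (G ⊔ edge x y) := ecc_le_diam _ u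

end

theorem level_sets_complete_general {V : Type} [Fintype V] (G : SimpleGraph V) (k d n : ℕ)
    (hk : 1 ≤ k)
    (hcard : Fintype.card V = n) (hconn : KConnected k G) (hdiam : diam G = d)
    (hmax : ∀ (W : Type) [Fintype W] (H : SimpleGraph W),
      Fintype.card W = n → KConnected k H → diam H = d → cei H ≤ cei G)
    (u0 ud : V)
    (hdist : G.dist u0 ud = d) :
    ∀ i, 1 ≤ i → i ≤ d →
      {v | G.dist u0 v = i}.Pairwise G.Adj ∧
      ({v | G.dist u0 v = i - 1} ∪ {v | G.dist u0 v = i}).Pairwise G.Adj := by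
  have hG := hconn.connected hk
  have := hconn.nontrivial hk
  have adj_of_close : ∀ x y, x ≠ y → G.dist u0 y ≤ G.dist u0 x + 1 →
      G.dist u0 x ≤ G.dist u0 y + 1 → G.Adj x y := by
    intro x y hne hxy hyx
    by_contra hnadj
    have hlt := G.lt_sup_edge x y hne hnadj
    have hdiam' := diam_sup_edge_eq hG (hdist.trans hdiam.symm) hxy hyx
    exact (cei_lt_cei_of_lt hG hlt).not_ge
      (hmax V _ hcard (hconn.mono hlt.le) (hdiam'.trans hdiam))
  intro i hi _
  have hunion : ({v | G.dist u0 v = i - 1} ∪ {v | G.dist u0 v = i}).Pairwise G.Adj := by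
    intro a ha b hb hab
    simp only [Set.mem_union, Set.mem_ofPred_eq] at ha hb
    exact adj_of_close a b hab (by omega) (by omega)
  exact ⟨hunion.mono Set.subset_union_right, hunion⟩

/-- if `G` maximizes the CEI among `k`-connected graphs of order `n`
with diameter `d`, `u₀ u₁ ⋯ u_d` is a diametral path and
`Aᵢ = {v : d_G(u₀,v) = i}`, then `G[Aᵢ]` and `G[Aᵢ₋₁ ∪ Aᵢ]` are complete for all
`1 ≤ i ≤ d`. -/
theorem level_sets_complete {V : Type} [Fintype V] (G : SimpleGraph V) (k d n : ℕ)
    (hk : 1 ≤ k) (hd : 3 ≤ d) (hn : k * (d - 1) + 2 ≤ n)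
    (hcard : Fintype.card V = n) (hconn : KConnected k G) (hdiam : diam G = d)
    (hmax : ∀ (W : Type) [Fintype W] (H : SimpleGraph W),
      Fintype.card W = n → KConnected k H → diam H = d → cei H ≤ cei G)
    (u0 ud : V) (p : G.Walk u0 ud) (hp : p.IsPath) (hplen : p.length = d)
    (hdist : G.dist u0 ud = d) :
    ∀ i, 1 ≤ i → i ≤ d →
      {v | G.dist u0 v = i}.Pairwise G.Adj ∧
      ({v | G.dist u0 v = i - 1} ∪ {v | G.dist u0 v = i}).Pairwise G.Adj :=
  level_sets_complete_general G k d n hk hcard hconn hdiam hmax u0 ud hdist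

end CEI
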